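/- Laxator of the free energy loss model: let X, X', M, M', Y, Y' be finite types, ω a distribution on X × X' with ω(x,x') > 0 for all x, x', with marginals ω_X, ω_{X'}, and c : X → Dist(M × Y), d : X' → Dist(M' × Y') channels with strictly positive densities; let c' : Y → Dist(X × M) and d' : Y' → Dist(X' × M') be arbitrary channels. With p_c(y) = ∑_{x,m} ω_X(x) · c x (m,y), c†(y)(x,m) = ω_X(x) · c x (m,y)/p_c(y), and analogously p_d, d†; with the tensor channel (c ⊗ d)(x,x')((m,m'),(y,y')) = c x (m,y) · d x' (m',y'), its pushforward p_{cd}(y,y') under ω and its exact inversion (c ⊗ d)†(y,y')((x,m),(x',m')) = ω(x,x') · c x (m,y) · d x' (m',y')/p_{cd}(y,y'); and with the free energies FE_c(y) = D(c'(y), c†(y)) − log p_c(y), FE_d(y') = D(d'(y'), d†(y')) − log p_d(y'), and FE_{cd}(y,y') = D((c' ⊗ d')(y,y'), (c ⊗ d)†(y,y')) − log p_{cd}(y,y') where (c' ⊗ d')(y,y')((x,m),(x',m')) = c'(y)(x,m) · d'(y')(x',m'); then for all y, y': FE_{cd}(y,y') = FE_c(y) + FE_d(y') + λ, where λ = ∑_{x,m,x',m'}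 c'(y)(x,m) · d'(y')(x',m') · log( ω_X(x) · ω_{X'}(x') / ω(x,x') ). -/

import Mathlib

/-!
A free energy `D(q, p / Z) - log Z` with `∑ q = 1` equals `∑ q log (q / p)` for the
unnormalised joint `p`, so the normalising constants drop out. The joint of the tensor system
is `ω c d`, those of the components are `ω_X c` and `ω_{X'} d`; since `c' d' / (ω c d)` is
`c' / (ω_X c)` times `d' / (ω_{X'} d)` times `ω_X ω_{X'} / ω`, its logarithm splits into the
two component free energies plus the laxity term.
-/

open scoped BigOperators

/-- The relative entropy (Kullback–Leibler divergence) between two distributions on a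
finite type, `D(p,q) = ∑ z, p z * log (p z / q z)`. -/
noncomputable def relEnt {Z : Type*} [Fintype Z] (p q : Z → ℝ) : ℝ :=
  ∑ z, p z * Real.log (p z / q z)

/-- First marginal of a joint distribution on `X × X'`. -/
noncomputable def margL {X X' : Type*} [Fintype X'] (ω : X × X' → ℝ) (x : X) : ℝ :=
  ∑ x', ω (x, x')

/-- Second marginal of a joint distribution on `X × X'`. -/
noncomputable def margR {X X' : Type*} [Fintype X] (ω : X × X' → ℝ) (x' : X') : ℝ :=
  ∑ x, ω (x, x')

/-- Pushforward of a prior along a coparameterized channel, discarding the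
coparameter: `p_c(y) = ∑ x m, π x * c x (m, y)`. -/
noncomputable def pushCo {X M Y : Type*} [Fintype X] [Fintype M]
    (π : X → ℝ) (c : X → M × Y → ℝ) (y : Y) : ℝ :=
  ∑ x, ∑ m, π x * c x (m, y)

/-- Exact (coparameterized) Bayesian inversion: `c†(y)(x,m) = π x * c x (m,y) / p_c(y)`. -/
noncomputable def exactInv {X M Y : Type*} [Fintype X] [Fintype M]
    (π : X → ℝ) (c : X → M × Y → ℝ) (y : Y) (xm : X × M) : ℝ :=
  π xm.1 * c xm.1 (xm.2, y) / pushCo π c y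

/-- Pushforward of a joint prior `ω` along the tensor of two coparameterized channels. -/
noncomputable def pushTensor {X X' M M' Y Y' : Type*}
    [Fintype X] [Fintype X'] [Fintype M] [Fintype M']
    (ω : X × X' → ℝ) (c : X → M × Y → ℝ) (d : X' → M' × Y' → ℝ) (y : Y) (y' : Y') : ℝ :=
  ∑ x, ∑ x', ∑ m, ∑ m', ω (x, x') * c x (m, y) * d x' (m', y')

lemma nonempty_of_sum_eq_one {Z : Type*} [Fintype Z] {f : Z → ℝ} (h : ∑ z, f z = 1) :
    Nonempty Z :=
  Finset.univ_nonempty_iff.mp (Finset.nonempty_of_sum_ne_zero (h ▸ one_ne_zero))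

section RelEnt

variable {Z Z' : Type*} [Fintype Z] [Fintype Z']

lemma relEnt_div_const (p q : Z → ℝ) {k : ℝ} (hq : ∀ z, q z ≠ 0) (hk : k ≠ 0)
    (hp : ∑ z, p z = 1) :
    relEnt p (fun z => q z / k) = relEnt p q + Real.log k := by
  have hterm : ∀ z, p z * Real.log (p z / (q z / k))
      = p z * Real.log (p z / q z) + p z * Real.log k := by
    intro z
    rcases eq_or_ne (p z) 0 with h | h
    · simp [h]
    · rw [div_div_eq_mul_div, ← div_mul_eq_mul_div,
        Real.log_mul (div_ne_zero h (hq z)) hk, mul_add]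
  simp only [relEnt, hterm, Finset.sum_add_distrib, ← Finset.sum_mul, hp, one_mul]

lemma relEnt_mul_prod (p q : Z → ℝ) (p' q' : Z' → ℝ) (r : Z × Z' → ℝ)
    (hq : ∀ z, q z ≠ 0) (hq' : ∀ z', q' z' ≠ 0) (hr : ∀ w, r w ≠ 0)
    (hp : ∑ z, p z = 1) (hp' : ∑ z', p' z' = 1) :
    relEnt (fun w => p w.1 * p' w.2) r
      = relEnt p q + relEnt p' q'
        + ∑ z, ∑ z', p z * p' z' * Real.log (q z * q' z' / r (z, z')) := by
  have hterm : ∀ z z', p z * p' z' * Real.log (p z * p' z' / r (z, z'))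
      = p' z' * (p z * Real.log (p z / q z)) + p z * (p' z' * Real.log (p' z' / q' z'))
        + p z * p' z' * Real.log (q z * q' z' / r (z, z')) := by
    intro z z'
    rcases eq_or_ne (p z) 0 with h | h
    · simp [h]
    rcases eq_or_ne (p' z') 0 with h' | h'
    · simp [h']
    have hsplit : p z * p' z' / r (z, z')
        = p z / q z * (p' z' / q' z' * (q z * q' z' / r (z, z'))) := by
      field_simp [hq z, hq' z', hr (z, z')]
    rw [hsplit, Real.log_mul (div_ne_zero h (hq z)) (mul_ne_zero (div_ne_zero h' (hq' z'))
        (div_ne_zero (mul_ne_zero (hq z) (hq' z')) (hr _))),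
      Real.log_mul (div_ne_zero h' (hq' z')) (div_ne_zero (mul_ne_zero (hq z) (hq' z')) (hr _))]
    ring
  simp only [relEnt, Fintype.sum_prod_type, hterm, Finset.sum_add_distrib, ← Finset.mul_sum,
    ← Finset.sum_mul, hp, hp', one_mul]

end RelEnt

lemma margL_pos {X X' : Type*} [Fintype X'] [Nonempty X'] {ω : X × X' → ℝ}
    (hω : ∀ p, 0 < ω p) (x : X) :
    0 < margL ω x :=
  Finset.sum_pos (fun _ _ => hω _) Finset.univ_nonempty

lemma margR_pos {X X' : Type*} [Fintype X] [Nonempty X] {ω : X × X' → ℝ}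
    (hω : ∀ p, 0 < ω p) (x' : X') :
    0 < margR ω x' :=
  Finset.sum_pos (fun _ _ => hω _) Finset.univ_nonempty

lemma pushCo_pos {X M Y : Type*} [Fintype X] [Fintype M] [Nonempty X] [Nonempty M]
    {π : X → ℝ} {c : X → M × Y → ℝ}
    (hπ : ∀ x, 0 < π x) (hc : ∀ x my, 0 < c x my) (y : Y) :
    0 < pushCo π c y :=
  Finset.sum_pos (fun x _ => Finset.sum_pos (fun m _ => mul_pos (hπ x) (hc x (m, y)))
    Finset.univ_nonempty) Finset.univ_nonempty

lemma pushTensor_pos {X X' M M' Y Y' : Type*} [Fintype X] [Fintype X'] [Fintype M] [Fintype M']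
    [Nonempty X] [Nonempty X'] [Nonempty M] [Nonempty M']
    {ω : X × X' → ℝ} {c : X → M × Y → ℝ} {d : X' → M' × Y' → ℝ}
    (hω : ∀ p, 0 < ω p) (hc : ∀ x my, 0 < c x my) (hd : ∀ x' my, 0 < d x' my)
    (y : Y) (y' : Y') :
    0 < pushTensor ω c d y y' :=
  Finset.sum_pos (fun x _ => Finset.sum_pos (fun x' _ => Finset.sum_pos (fun m _ =>
    Finset.sum_pos (fun m' _ => mul_pos (mul_pos (hω (x, x')) (hc x (m, y))) (hd x' (m', y')))
      Finset.univ_nonempty) Finset.univ_nonempty) Finset.univ_nonempty) Finset.univ_nonempty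

lemma relEnt_exactInv {X M Y : Type*} [Fintype X] [Fintype M] (p : X × M → ℝ)
    {π : X → ℝ} {c : X → M × Y → ℝ} {y : Y} (hπc : ∀ x m, π x * c x (m, y) ≠ 0)
    (hpush : pushCo π c y ≠ 0) (hp : ∑ xm, p xm = 1) :
    relEnt p (exactInv π c y) = relEnt p (fun xm => π xm.1 * c xm.1 (xm.2, y))
      + Real.log (pushCo π c y) :=
  relEnt_div_const p _ (fun xm => hπc xm.1 xm.2) hpush hp

theorem free_energy_laxator_general
    {X X' M M' Y Y' : Type*}
    [Fintype X] [Fintype X'] [Fintype M] [Fintype M']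
    (ω : X × X' → ℝ) (c : X → M × Y → ℝ) (d : X' → M' × Y' → ℝ)
    (c' : Y → X × M → ℝ) (d' : Y' → X' × M' → ℝ)
    (hω : ∀ p, 0 < ω p)
    (hc : ∀ x my, 0 < c x my)
    (hd : ∀ x' my, 0 < d x' my)
    (hc'₁ : ∀ y, ∑ xm, c' y xm = 1)
    (hd'₁ : ∀ y', ∑ xm, d' y' xm = 1) :
    ∀ (y : Y) (y' : Y'),
      (relEnt
          (fun p : (X × M) × (X' × M') => c' y p.1 * d' y' p.2)
          (fun p : (X × M) × (X' × M') =>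
            ω (p.1.1, p.2.1) * c p.1.1 (p.1.2, y) * d p.2.1 (p.2.2, y')
              / pushTensor ω c d y y')
        - Real.log (pushTensor ω c d y y'))
      = (relEnt (c' y) (exactInv (margL ω) c y) - Real.log (pushCo (margL ω) c y))
        + (relEnt (d' y') (exactInv (margR ω) d y') - Real.log (pushCo (margR ω) d y'))
        + ∑ x, ∑ m, ∑ x', ∑ m',
            c' y (x, m) * d' y' (x', m')
              * Real.log (margL ω x * margR ω x' / ω (x, x')) := by
  intro y y'
  obtain ⟨_, _⟩ := nonempty_prod.mp (nonempty_of_sum_eq_one (hc'₁ y))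
  obtain ⟨_, _⟩ := nonempty_prod.mp (nonempty_of_sum_eq_one (hd'₁ y'))
  have hjoint : ∀ p : (X × M) × (X' × M'),
      ω (p.1.1, p.2.1) * c p.1.1 (p.1.2, y) * d p.2.1 (p.2.2, y') ≠ 0 :=
    fun p => (mul_pos (mul_pos (hω _) (hc _ _)) (hd _ _)).ne'
  have hprod : ∑ p : (X × M) × (X' × M'), c' y p.1 * d' y' p.2 = 1 := by
    rw [Fintype.sum_prod_type, ← Fintype.sum_mul_sum, hc'₁ y, hd'₁ y', one_mul]
  have hlaxity : ∀ x m x' m',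
      margL ω x * c x (m, y) * (margR ω x' * d x' (m', y'))
          / (ω (x, x') * c x (m, y) * d x' (m', y'))
        = margL ω x * margR ω x' / ω (x, x') := by
    intro x m x' m'
    field_simp [(hc x (m, y)).ne', (hd x' (m', y')).ne']
  rw [relEnt_div_const _ _ hjoint (pushTensor_pos hω hc hd y y').ne' hprod,
    relEnt_exactInv _ (fun x m => (mul_pos (margL_pos hω x) (hc x (m, y))).ne')
      (pushCo_pos (margL_pos hω) hc y).ne' (hc'₁ y),
    relEnt_exactInv _ (fun x m => (mul_pos (margR_pos hω x) (hd x (m, y'))).ne')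
      (pushCo_pos (margR_pos hω) hd y').ne' (hd'₁ y'),
    relEnt_mul_prod (c' y) (fun xm => margL ω xm.1 * c xm.1 (xm.2, y))
      (d' y') (fun xm => margR ω xm.1 * d xm.1 (xm.2, y')) _
      (fun xm => (mul_pos (margL_pos hω xm.1) (hc _ _)).ne')
      (fun xm => (mul_pos (margR_pos hω xm.1) (hd _ _)).ne') hjoint (hc'₁ y) (hd'₁ y')]
  simp only [Fintype.sum_prod_type, hlaxity]
  ring

/-- **Laxator of the free energy loss model**: the free energy of the tensor system
equals the sum of the componentwise free energies (at the marginal priors) plus the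
laxity term `λ = ∑ c' d' * log (ω_X ⊗ ω_{X'} / ω)`. -/
theorem free_energy_laxator
    {X X' M M' Y Y' : Type*}
    [Fintype X] [Fintype X'] [Fintype M] [Fintype M'] [Fintype Y] [Fintype Y']
    (ω : X × X' → ℝ) (c : X → M × Y → ℝ) (d : X' → M' × Y' → ℝ)
    (c' : Y → X × M → ℝ) (d' : Y' → X' × M' → ℝ)
    (hω : ∀ p, 0 < ω p) (hω₁ : ∑ p, ω p = 1)
    (hc : ∀ x my, 0 < c x my) (hc₁ : ∀ x, ∑ my, c x my = 1)
    (hd : ∀ x' my, 0 < d x' my) (hd₁ : ∀ x', ∑ my, d x' my = 1)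
    (hc'₀ : ∀ y xm, 0 ≤ c' y xm) (hc'₁ : ∀ y, ∑ xm, c' y xm = 1)
    (hd'₀ : ∀ y' xm, 0 ≤ d' y' xm) (hd'₁ : ∀ y', ∑ xm, d' y' xm = 1) :
    ∀ (y : Y) (y' : Y'),
      (relEnt
          (fun p : (X × M) × (X' × M') => c' y p.1 * d' y' p.2)
          (fun p : (X × M) × (X' × M') =>
            ω (p.1.1, p.2.1) * c p.1.1 (p.1.2, y) * d p.2.1 (p.2.2, y')
              / pushTensor ω c d y y')
        - Real.log (pushTensor ω c d y y'))
      = (relEnt (c' y) (exactInv (margL ω) c y) - Real.log (pushCo (margL ω) c y))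
        + (relEnt (d' y') (exactInv (margR ω) d y') - Real.log (pushCo (margR ω) d y'))
        + ∑ x, ∑ m, ∑ x', ∑ m',
            c' y (x, m) * d' y' (x', m')
              * Real.log (margL ω x * margR ω x' / ω (x, x')) :=
  free_energy_laxator_general ω c d c' d' hω hc hd hc'₁ hd'₁
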